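/- arXiv:2406.12664 — 5 statements merged into one kernel-verified Lean document; each statement's English description precedes it below -/
import Mathlib

section
/- Let V be a finite-dimensional real inner product space of dimension n ≥ 1, let W be a real inner product space, and let α : V × V → W be a symmetric bilinear map that is traceless, i.e. for some orthonormal basis (e₁,…,eₙ) of V one has Σᵢ α(eᵢ,eᵢ) = 0. If a vector Y ∈ V satisfies ⟨α(Y,Y), α(X,X)⟩ = ‖α(X,Y)‖² for every X ∈ V, then α(X,Y) = 0 for every X ∈ V. -/
open scoped RealInnerProductSpace

/-! Pairing the hypothesis with `α(Y,Y)` and summing over the basis, tracelessness turns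
`∑ᵢ ‖α(eᵢ,Y)‖²` into `⟪α(Y,Y), ∑ᵢ α(eᵢ,eᵢ)⟫ = 0`, so the linear map `α(·,Y)` kills a basis. -/

section

variable {V W : Type*} [AddCommGroup V] [Module ℝ V] [NormedAddCommGroup W]
  [InnerProductSpace ℝ W] {ι : Type*} [Fintype ι]

theorem sum_norm_sq_apply_eq_zero_of_sum_diag_eq_zero
    (α : V →ₗ[ℝ] V →ₗ[ℝ] W) (e : ι → V)
    (htrace : ∑ i, α (e i) (e i) = 0) (Y : V)
    (hY : ∀ X : V, ⟪α Y Y, α X X⟫ = ‖α X Y‖ ^ 2) :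
    ∑ i, ‖α (e i) Y‖ ^ 2 = 0 :=
  calc ∑ i, ‖α (e i) Y‖ ^ 2 = ∑ i, ⟪α Y Y, α (e i) (e i)⟫ := by simp only [hY]
    _ = ⟪α Y Y, ∑ i, α (e i) (e i)⟫ := (inner_sum _ _ _).symm
    _ = 0 := by rw [htrace, inner_zero_right]

theorem Module.Basis.linearMap_eq_zero_of_sum_norm_sq_eq_zero
    (b : Basis ι ℝ V) {f : V →ₗ[ℝ] W}
    (h : ∑ i, ‖f (b i)‖ ^ 2 = 0) : f = 0 :=
  b.ext fun i => by
    simpa using (Finset.sum_eq_zero_iff_of_nonneg fun i _ => sq_nonneg ‖f (b i)‖).mp h i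
      (Finset.mem_univ i)

end

theorem stmt_0_general {V W : Type*} [NormedAddCommGroup V] [InnerProductSpace ℝ V]
    [NormedAddCommGroup W] [InnerProductSpace ℝ W]
    (n : ℕ)
    (α : V →ₗ[ℝ] V →ₗ[ℝ] W)
    (e : OrthonormalBasis (Fin n) ℝ V)
    (htraceless : ∑ i, α (e i) (e i) = 0)
    (Y : V)
    (hY : ∀ X : V, ⟪α Y Y, α X X⟫ = ‖α X Y‖ ^ 2) :
    ∀ X : V, α X Y = 0 := by
  have hflip : α.flip Y = 0 := e.toBasis.linearMap_eq_zero_of_sum_norm_sq_eq_zero <| by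
    simpa using sum_norm_sq_apply_eq_zero_of_sum_diag_eq_zero α e htraceless Y hY
  intro X
  simpa using LinearMap.congr_fun hflip X

/-- Algebraic core of Lemma 2.1: a traceless symmetric bilinear map `α` on a
finite-dimensional real inner product space satisfies: if
`⟪α(Y,Y), α(X,X)⟫ = ‖α(X,Y)‖²` for all `X`, then `α(X,Y) = 0` for all `X`. -/
theorem stmt_0 {V W : Type*} [NormedAddCommGroup V] [InnerProductSpace ℝ V]
    [FiniteDimensional ℝ V] [NormedAddCommGroup W] [InnerProductSpace ℝ W]
    (n : ℕ) (hn : 1 ≤ n) (hdim : Module.finrank ℝ V = n)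
    (α : V →ₗ[ℝ] V →ₗ[ℝ] W)
    (hsymm : ∀ X Y : V, α X Y = α Y X)
    (e : OrthonormalBasis (Fin n) ℝ V)
    (htraceless : ∑ i, α (e i) (e i) = 0)
    (Y : V)
    (hY : ∀ X : V, ⟪α Y Y, α X X⟫ = ‖α X Y‖ ^ 2) :
    ∀ X : V, α X Y = 0 :=
  stmt_0_general n α e htraceless Y hY
end

section
/- Let n be a natural number, let C₀ be a real n × n matrix, and define J₀(t) := (cosh t) • 1 − (sinh t) • C₀, where 1 is the identity matrix. Define C(t) := −((sinh t) • 1 − (cosh t) • C₀) * (J₀(t))⁻¹. Then J₀(0) = 1 is invertible, C(0) = C₀, and at every t ∈ ℝ at which J₀(t) is invertible, the matrix-valued function C is differentiable at t with derivative C(t) * C(t) − 1; that is, C satisfies the Riccati equation C′ = C² − I. -/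
/-!
`J₀` solves `J'' = J`. For any such `J`, the rule `(J⁻¹)' = -J⁻¹ J' J⁻¹` gives, for
`C = -J' J⁻¹`, `C' = -J'' J⁻¹ + J' J⁻¹ J' J⁻¹ = C² - 1` wherever `J` is invertible.
-/

open Matrix Topology

attribute [local instance] Matrix.normedAddCommGroup Matrix.normedSpace

section

variable {𝕜 : Type*} [NontriviallyNormedField 𝕜] {m : Type*} [Fintype m] [DecidableEq m]
  {J : 𝕜 → Matrix m m 𝕜} {J' : Matrix m m 𝕜} {t : 𝕜}

/- Matrices carry the entrywise sup norm here, which is not a normed-ring norm, so the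
normed-ring calculus (`HasDerivAt.mul`, `hasFDerivAt_ringInverse`) does not apply. -/
theorem HasDerivAt.matrix_mul [CompleteSpace 𝕜] {A B : 𝕜 → Matrix m m 𝕜} {A' B' : Matrix m m 𝕜}
    (hA : HasDerivAt A A' t) (hB : HasDerivAt B B' t) :
    HasDerivAt (fun s => A s * B s) (A' * B t + A t * B') t := by
  rw [add_comm]
  exact (LinearMap.toContinuousLinearMap (LinearMap.toContinuousLinearMap.toLinearMap ∘ₗ
    LinearMap.mul 𝕜 (Matrix m m 𝕜))).hasDerivAt_of_bilinear (fun _ => hA) (fun _ => hB)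

theorem ContinuousAt.matrix_inv (hJ : ContinuousAt J t) (ht : IsUnit (J t)) :
    ContinuousAt (fun s => (J s)⁻¹) t := by
  refine (continuousAt_matrix_inv _ ?_).comp hJ
  rw [Ring.inverse_eq_inv']
  exact continuousAt_inv₀ ((isUnit_iff_isUnit_det _).mp ht).ne_zero

theorem ContinuousAt.eventually_isUnit_matrix (hJ : ContinuousAt J t) (ht : IsUnit (J t)) :
    ∀ᶠ s in 𝓝 t, IsUnit (J s) := by
  simp only [isUnit_iff_isUnit_det, isUnit_iff_ne_zero] at ht ⊢
  exact (continuous_id.matrix_det.continuousAt.comp hJ).eventually_ne ht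

theorem HasDerivAt.matrix_inv (hJ : HasDerivAt J J' t) (ht : IsUnit (J t)) :
    HasDerivAt (fun s => (J s)⁻¹) (-((J t)⁻¹ * J' * (J t)⁻¹)) t := by
  have hinv := (hJ.continuousAt.matrix_inv ht).tendsto.mono_left (nhdsWithin_le_nhds (s := {t}ᶜ))
  have hunit := (hJ.continuousAt.eventually_isUnit_matrix ht).filter_mono
    (nhdsWithin_le_nhds (s := {t}ᶜ))
  refine hasDerivAt_iff_tendsto_slope.mpr <|
    ((hinv.mul (hasDerivAt_iff_tendsto_slope.mp hJ)).mul tendsto_const_nhds).neg.congr' ?_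
  filter_upwards [hunit] with s hs
  rw [slope_def_module, slope_def_module, inv_sub_inv (iff_of_true hs ht), ← neg_sub (J t),
    Matrix.mul_smul, Matrix.smul_mul, Matrix.mul_neg, Matrix.neg_mul, smul_neg, neg_neg]

theorem HasDerivAt.riccati_of_second_deriv_eq_self [CompleteSpace 𝕜] {A C : 𝕜 → Matrix m m 𝕜}
    (hJ : HasDerivAt J (A t) t) (hA : HasDerivAt A (J t) t) (ht : IsUnit (J t))
    (hC : ∀ s, C s = -(A s * (J s)⁻¹)) :
    HasDerivAt C (C t * C t - 1) t := by
  rw [funext hC]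
  refine (hA.matrix_mul (hJ.matrix_inv ht)).neg.congr_deriv ?_
  rw [mul_nonsing_inv _ ((isUnit_iff_isUnit_det _).mp ht)]
  noncomm_ring

end

/-- Formula (2.1) of Proposition 3.1: with `J₀(t) = (cosh t) I − (sinh t) C₀` and
`C(t) = −J₀′(t) J₀(t)⁻¹`, one has `J₀(0) = I` invertible, `C(0) = C₀`, and `C`
satisfies the Riccati equation `C′ = C² − I` wherever `J₀(t)` is invertible. -/
theorem stmt_2 (n : ℕ) (C₀ : Matrix (Fin n) (Fin n) ℝ)
    (J₀ : ℝ → Matrix (Fin n) (Fin n) ℝ)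
    (hJ₀ : ∀ t : ℝ, J₀ t = Real.cosh t • (1 : Matrix (Fin n) (Fin n) ℝ) - Real.sinh t • C₀)
    (C : ℝ → Matrix (Fin n) (Fin n) ℝ)
    (hC : ∀ t : ℝ, C t =
      -((Real.sinh t • (1 : Matrix (Fin n) (Fin n) ℝ) - Real.cosh t • C₀) * (J₀ t)⁻¹)) :
    J₀ 0 = 1 ∧ IsUnit (J₀ 0) ∧ C 0 = C₀ ∧
      ∀ t : ℝ, IsUnit (J₀ t) → HasDerivAt C (C t * C t - 1) t := by
  have hJ₀' (t : ℝ) : HasDerivAt J₀ (Real.sinh t • 1 - Real.cosh t • C₀) t := by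
    rw [funext hJ₀]
    exact ((Real.hasDerivAt_cosh t).smul_const _).sub ((Real.hasDerivAt_sinh t).smul_const _)
  have hJ₀'' (t : ℝ) :
      HasDerivAt (fun s => Real.sinh s • (1 : Matrix (Fin n) (Fin n) ℝ) - Real.cosh s • C₀)
        (J₀ t) t := by
    rw [hJ₀]
    exact ((Real.hasDerivAt_sinh t).smul_const _).sub ((Real.hasDerivAt_cosh t).smul_const _)
  have hJ₀_zero : J₀ 0 = 1 := by simp [hJ₀]
  exact ⟨hJ₀_zero, hJ₀_zero ▸ isUnit_one, by simp [hC, hJ₀_zero],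
    fun t ht => (hJ₀' t).riccati_of_second_deriv_eq_self (hJ₀'' t) ht hC⟩
end

section
/- Let n be a natural number and let C : ℝ → Matrix n n ℝ be a differentiable matrix-valued function satisfying the Riccati equation deriv C t = C(t) * C(t) − 1 for all t ∈ ℝ, where 1 is the identity matrix. Then for every t ∈ ℝ the matrix (cosh t) • 1 − (sinh t) • C(0) is invertible and C(t) = −((sinh t) • 1 − (cosh t) • C(0)) * ((cosh t) • 1 − (sinh t) • C(0))⁻¹. -/
/-!
Put `J(t) = cosh t • 1 - sinh t • C(0)`, so that `J'' = J`. The Riccati equation gives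
`(C J + J')' = (C² - 1) J + C J' + J = C (C J + J')`, and `C J + J'` vanishes at `t = 0`; by
uniqueness for this linear ODE, `C J = -J'` for all `t`. Hence
`(cosh t • 1 + sinh t • C(t)) J = cosh t • J - sinh t • J' = (cosh² t - sinh² t) • 1 = 1`,
so `J(t)` is invertible and `C = -J' J⁻¹`.
-/

open Matrix

attribute [local instance] Matrix.normedAddCommGroup Matrix.normedSpace

open Set in
theorem linear_ODE_solution_eq_zero {E : Type*} [NormedAddCommGroup E] [NormedSpace ℝ E]
    {A : ℝ → E →L[ℝ] E} (hA : Continuous A) {X : ℝ → E}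
    (hX : ∀ t, HasDerivAt X (A t (X t)) t) {t₀ : ℝ} (h₀ : X t₀ = 0) (t : ℝ) : X t = 0 := by
  set T := max |t| |t₀| + 1
  have hmem : ∀ s, |s| ≤ max |t| |t₀| → s ∈ Ioo (-T) T := fun s hs =>
    abs_lt.mp (by simp only [T]; linarith)
  obtain ⟨M, hM⟩ := isCompact_Icc.exists_bound_of_continuousOn (hA.continuousOn (s := Icc (-T) T))
  have hLip : ∀ s ∈ Ioo (-T) T, LipschitzOnWith M.toNNReal (A s) univ := fun s hs =>
    ((A s).lipschitz.weaken (by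
      rw [← norm_toNNReal]
      exact Real.toNNReal_le_toNNReal (hM s (Ioo_subset_Icc_self hs)))).lipschitzOnWith
  exact ODE_solution_unique_of_mem_Ioo (g := fun _ => 0) hLip (hmem t₀ (le_max_right _ _))
    (fun s _ => ⟨hX s, mem_univ _⟩)
    (fun s _ => ⟨by simpa using hasDerivAt_const s (0 : E), mem_univ _⟩) h₀
    (hmem t (le_max_left _ _))

noncomputable section

def Matrix.mulCLM {ι : Type*} [Fintype ι] :
    Matrix ι ι ℝ →L[ℝ] Matrix ι ι ℝ →L[ℝ] Matrix ι ι ℝ :=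
  (LinearMap.mul ℝ (Matrix ι ι ℝ)).toContinuousBilinearMap

variable {ι : Type*} [DecidableEq ι]

def jacobiTensor (P : Matrix ι ι ℝ) (t : ℝ) : Matrix ι ι ℝ :=
  Real.cosh t • 1 - Real.sinh t • P

def jacobiTensorDeriv (P : Matrix ι ι ℝ) (t : ℝ) : Matrix ι ι ℝ :=
  Real.sinh t • 1 - Real.cosh t • P

theorem hasDerivAt_jacobiTensor [Fintype ι] (P : Matrix ι ι ℝ) (t : ℝ) :
    HasDerivAt (jacobiTensor P) (jacobiTensorDeriv P t) t :=
  ((Real.hasDerivAt_cosh t).smul_const (1 : Matrix ι ι ℝ)).sub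
    ((Real.hasDerivAt_sinh t).smul_const P)

theorem hasDerivAt_jacobiTensorDeriv [Fintype ι] (P : Matrix ι ι ℝ) (t : ℝ) :
    HasDerivAt (jacobiTensorDeriv P) (jacobiTensor P t) t :=
  ((Real.hasDerivAt_sinh t).smul_const (1 : Matrix ι ι ℝ)).sub
    ((Real.hasDerivAt_cosh t).smul_const P)

theorem cosh_smul_jacobiTensor_sub_sinh_smul_jacobiTensorDeriv (P : Matrix ι ι ℝ) (t : ℝ) :
    Real.cosh t • jacobiTensor P t - Real.sinh t • jacobiTensorDeriv P t = 1 :=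
  calc Real.cosh t • jacobiTensor P t - Real.sinh t • jacobiTensorDeriv P t
      = (Real.cosh t ^ 2 - Real.sinh t ^ 2) • (1 : Matrix ι ι ℝ) := by
        simp only [jacobiTensor, jacobiTensorDeriv]
        module
    _ = 1 := by rw [Real.cosh_sq_sub_sinh_sq, one_smul]

section Riccati

variable [Fintype ι] {C : ℝ → Matrix ι ι ℝ}

theorem hasDerivAt_riccati_mul_jacobiTensor_add (hC : ∀ t, HasDerivAt C (C t * C t - 1) t)
    (P : Matrix ι ι ℝ) (t : ℝ) :
    HasDerivAt (fun s => C s * jacobiTensor P s + jacobiTensorDeriv P s)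
      (C t * (C t * jacobiTensor P t + jacobiTensorDeriv P t)) t := by
  refine ((Matrix.mulCLM.hasDerivAt_of_bilinear (fun _ => hC t)
    (fun _ => hasDerivAt_jacobiTensor P t)).add (hasDerivAt_jacobiTensorDeriv P t)).congr_deriv ?_
  show C t * jacobiTensorDeriv P t + (C t * C t - 1) * jacobiTensor P t + jacobiTensor P t = _
  noncomm_ring

theorem riccati_mul_jacobiTensor (hC : ∀ t, HasDerivAt C (C t * C t - 1) t) (t : ℝ) :
    C t * jacobiTensor (C 0) t = -jacobiTensorDeriv (C 0) t := by
  have hcont : Continuous fun s => Matrix.mulCLM (C s) :=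
    Matrix.mulCLM.continuous.comp (continuous_iff_continuousAt.2 fun s => (hC s).continuousAt)
  rw [eq_neg_iff_add_eq_zero]
  refine linear_ODE_solution_eq_zero hcont (hasDerivAt_riccati_mul_jacobiTensor_add hC (C 0))
    (t₀ := 0) ?_ t
  simp [jacobiTensor, jacobiTensorDeriv]

theorem riccati_left_inverse_jacobiTensor (hC : ∀ t, HasDerivAt C (C t * C t - 1) t) (t : ℝ) :
    (Real.cosh t • 1 + Real.sinh t • C t) * jacobiTensor (C 0) t = 1 := by
  rw [add_mul, smul_mul_assoc, smul_mul_assoc, one_mul, riccati_mul_jacobiTensor hC, smul_neg,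
    ← sub_eq_add_neg, cosh_smul_jacobiTensor_sub_sinh_smul_jacobiTensorDeriv]

theorem riccati_eq_neg_jacobiTensorDeriv_mul_inv (hC : ∀ t, HasDerivAt C (C t * C t - 1) t)
    (t : ℝ) :
    IsUnit (jacobiTensor (C 0) t) ∧
      C t = -(jacobiTensorDeriv (C 0) t * (jacobiTensor (C 0) t)⁻¹) := by
  have hdet : IsUnit (jacobiTensor (C 0) t).det :=
    Matrix.isUnit_det_of_left_inverse (riccati_left_inverse_jacobiTensor hC t)
  refine ⟨(Matrix.isUnit_iff_isUnit_det _).2 hdet, ?_⟩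
  rw [← neg_mul, ← riccati_mul_jacobiTensor hC]
  exact (Matrix.mul_nonsing_inv_cancel_right _ _ hdet).symm

end Riccati

end

/-- Proposition 3.1: a globally defined solution of the matrix Riccati equation
`C′ = C² − I` is given by `C(t) = −J₀′(t) J₀(t)⁻¹` with
`J₀(t) = (cosh t) I − (sinh t) C(0)`, and `J₀(t)` is invertible for all `t`. -/
theorem stmt_3 (n : ℕ) (C : ℝ → Matrix (Fin n) (Fin n) ℝ)
    (hdiff : Differentiable ℝ C)
    (hderiv : ∀ t : ℝ, deriv C t = C t * C t - 1) :
    ∀ t : ℝ,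
      IsUnit (Real.cosh t • (1 : Matrix (Fin n) (Fin n) ℝ) - Real.sinh t • C 0) ∧
      C t = -((Real.sinh t • (1 : Matrix (Fin n) (Fin n) ℝ) - Real.cosh t • C 0) *
        (Real.cosh t • (1 : Matrix (Fin n) (Fin n) ℝ) - Real.sinh t • C 0)⁻¹) :=
  riccati_eq_neg_jacobiTensorDeriv_mul_inv fun t => (hdiff t).hasDerivAt.congr_deriv (hderiv t)
end

section
/- Let n be a natural number and let C : ℝ → Matrix n n ℝ be a differentiable matrix-valued function satisfying deriv C t = C(t) * C(t) − 1 for all t ∈ ℝ, where 1 is the identity matrix. Then every real eigenvalue λ of C(0) — that is, every λ ∈ ℝ for which there exists a nonzero vector v with C(0) *ᵥ v = λ • v — satisfies |λ| ≤ 1. -/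
/-!
Along an eigenvector the equation reduces to the scalar Riccati equation `c' = c² - 1`,
`c(0) = λ`, solved by `c = b / a` where `a' = -b`, `b' = -a`; for `λ² > 1` this solution
blows up, because `a` vanishes at a time `t₀` where `b` does not. To transfer this to `C`:
for any such pair `(a, b)` the vector `g = a • C v - b • v` solves the linear equation
`g' = C g`, the eigenvalue equation gives `g(0) = 0`, so `g ≡ 0` by uniqueness, and at `t₀`
this reads `b(t₀) • v = 0`.
-/

open Matrix Set Real

attribute [local instance] Matrix.normedAddCommGroup Matrix.normedSpace

noncomputable def Matrix.mulVecCLM {m n : Type*} [Fintype m] [Fintype n] :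
    Matrix m n ℝ →L[ℝ] (n → ℝ) →L[ℝ] (m → ℝ) :=
  LinearMap.toContinuousLinearMap
    ((LinearMap.toContinuousLinearMap : ((n → ℝ) →ₗ[ℝ] (m → ℝ)) ≃ₗ[ℝ] _).toLinearMap ∘ₗ
      mulVecBilin ℝ ℝ)

lemma HasDerivAt.matrix_mulVec_const {m n : Type*} [Fintype m] [Fintype n]
    {C : ℝ → Matrix m n ℝ} {C' : Matrix m n ℝ} {t : ℝ} (hC : HasDerivAt C C' t) (v : n → ℝ) :
    HasDerivAt (fun s => C s *ᵥ v) (C' *ᵥ v) t :=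
  ((ContinuousLinearMap.apply ℝ (m → ℝ) v).comp mulVecCLM).hasFDerivAt.comp_hasDerivAt t hC

theorem ODE_solution_eq_zero_of_linear {E : Type*} [NormedAddCommGroup E] [NormedSpace ℝ E]
    {A : ℝ → E →L[ℝ] E} (hA : Continuous A) {f : ℝ → E}
    (hf : ∀ t, HasDerivAt f (A t (f t)) t) {t₀ : ℝ} (h₀ : f t₀ = 0) : f = 0 := by
  funext t
  set R := |t| + |t₀| + 1
  obtain ⟨K, hK⟩ := (isCompact_Icc (a := -R) (b := R)).exists_bound_of_continuousOn
    hA.continuousOn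
  have hLip : ∀ s ∈ Ioo (-R) R, LipschitzOnWith K.toNNReal (A s) univ := by
    intro s hs
    have hbound : ‖A s‖₊ ≤ K.toNNReal := by
      rw [← norm_toNNReal]
      exact Real.toNNReal_le_toNNReal (hK s (Ioo_subset_Icc_self hs))
    exact ((A s).lipschitz.weaken hbound).lipschitzOnWith
  have ht₀ : t₀ ∈ Ioo (-R) R := by
    constructor <;> linarith [neg_abs_le t₀, le_abs_self t₀, abs_nonneg t]
  have ht : t ∈ Icc (-R) R := by
    constructor <;> linarith [neg_abs_le t, le_abs_self t, abs_nonneg t₀]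
  exact ODE_solution_unique_of_mem_Icc (g := 0) hLip ht₀
    (HasDerivAt.continuousOn fun s _ => hf s) (fun s _ => hf s) (fun _ _ => mem_univ _)
    continuousOn_const (fun s _ => by simp) (fun _ _ => mem_univ _) h₀ ht

theorem HasDerivAt.smul_mulVec_sub_smul_of_riccati {ι : Type*} [Fintype ι] [DecidableEq ι]
    {C : ℝ → Matrix ι ι ℝ} {a b : ℝ → ℝ} {t : ℝ} (hC : HasDerivAt C (C t * C t - 1) t)
    (ha : HasDerivAt a (-b t) t) (hb : HasDerivAt b (-a t) t) (v : ι → ℝ) :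
    HasDerivAt (fun s => a s • (C s *ᵥ v) - b s • v)
      (C t *ᵥ (a t • (C t *ᵥ v) - b t • v)) t := by
  refine ((ha.smul (hC.matrix_mulVec_const v)).sub (hb.smul_const v)).congr_deriv ?_
  simp only [mulVec_sub, mulVec_smul, sub_mulVec, one_mulVec, ← mulVec_mulVec]
  module

lemma exists_mul_exp_neg_eq_mul_exp {p q : ℝ} (hqp : 0 < q / p) :
    ∃ s, q * exp (-s) = p * exp s := by
  have hp : p ≠ 0 := by rintro rfl; simp at hqp
  set s := log (q / p) / 2
  have hs : exp s * exp s = q / p := by rw [← exp_add, add_halves, exp_log hqp]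
  refine ⟨s, ?_⟩
  rw [exp_neg, ← div_eq_mul_inv, div_eq_iff (exp_pos s).ne', mul_assoc, hs,
    mul_div_cancel₀ q hp]

theorem sq_le_one_of_riccati_eigenvalue {ι : Type*} [Fintype ι] [DecidableEq ι]
    {C : ℝ → Matrix ι ι ℝ} (hC : ∀ t, HasDerivAt C (C t * C t - 1) t)
    {lam : ℝ} {v : ι → ℝ} (hv : v ≠ 0) (heig : C 0 *ᵥ v = lam • v) : lam ^ 2 ≤ 1 := by
  by_contra! hlam
  set p := lam - 1
  set q := lam + 1
  -- twice the solution of `a' = -b`, `b' = -a` with `a(0) = 1`, `b(0) = λ`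
  set a : ℝ → ℝ := fun t => q * exp (-t) - p * exp t
  set b : ℝ → ℝ := fun t => q * exp (-t) + p * exp t
  have ha : ∀ t, HasDerivAt a (-b t) t := fun t => by
    refine ((((hasDerivAt_neg t).exp).const_mul q).sub
      ((hasDerivAt_exp t).const_mul p)).congr_deriv ?_
    simp only [b]; ring
  have hb : ∀ t, HasDerivAt b (-a t) t := fun t => by
    refine ((((hasDerivAt_neg t).exp).const_mul q).add
      ((hasDerivAt_exp t).const_mul p)).congr_deriv ?_
    simp only [a]; ring
  have hg : (fun t => a t • (C t *ᵥ v) - b t • v) = 0 := by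
    refine ODE_solution_eq_zero_of_linear (A := fun t => mulVecCLM (C t))
      (mulVecCLM.continuous.comp (continuous_iff_continuousAt.2 fun t => (hC t).continuousAt))
      (fun t => (hC t).smul_mulVec_sub_smul_of_riccati (ha t) (hb t) v) (t₀ := 0) ?_
    simp only [a, b, heig, neg_zero, exp_zero, p, q]
    module
  have hp : p ≠ 0 := by rintro h; simp [sub_eq_zero.1 h] at hlam
  have hqp : 0 < q / p := by
    rw [← mul_div_mul_right q p hp]
    exact div_pos (by nlinarith) (mul_self_pos.2 hp)
  obtain ⟨t₀, ht₀⟩ := exists_mul_exp_neg_eq_mul_exp hqp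
  have hb₀ : b t₀ = 2 * p * exp t₀ := by simp only [b, ht₀]; ring
  have hg₀ := congrFun hg t₀
  simp [a, ht₀, hb₀, hp, hv] at hg₀

/-- Final assertion of Proposition 3.1: if the matrix Riccati equation
`C′ = C² − I` is satisfied for all `t ∈ ℝ`, then every real eigenvalue `λ` of
`C(0)` satisfies `|λ| ≤ 1`. -/
theorem stmt_4 (n : ℕ) (C : ℝ → Matrix (Fin n) (Fin n) ℝ)
    (hdiff : Differentiable ℝ C)
    (hderiv : ∀ t : ℝ, deriv C t = C t * C t - 1)
    (lam : ℝ) (v : Fin n → ℝ) (hv : v ≠ 0) (heig : C 0 *ᵥ v = lam • v) :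
    |lam| ≤ 1 := by
  have hC : ∀ t, HasDerivAt C (C t * C t - 1) t := fun t => hderiv t ▸ (hdiff t).hasDerivAt
  exact (sq_le_one_iff_abs_le_one lam).1 (sq_le_one_of_riccati_eigenvalue hC hv heig)
end

section
/- Let c : ℝ → ℝ be a differentiable function satisfying the scalar Riccati equation deriv c t = (c t)² − 1 for all t ∈ ℝ. Then |c(t)| ≤ 1 for all t ∈ ℝ. -/
/-!
If `c t₀ > 1`, then `c' = c² - 1 > 0` at the level `c t₀`, so `c` can never drop back below
`c t₀` after `t₀`. On `[t₀, ∞)` this gives `c' ≥ δ c²` with `δ = 1 - 1 / c t₀² > 0`, so `1 / c`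
decreases at rate at least `δ` and would have to reach `0` in finite time. Hence `c ≤ 1`, and the
lower bound follows by applying this to the solution `t ↦ -c (-t)`.
-/

theorem le_of_hasDerivAt_autonomous {F c : ℝ → ℝ} (hc : ∀ t, HasDerivAt c (F (c t)) t)
    {t₀ t : ℝ} (hF : 0 < F (c t₀)) (ht : t₀ ≤ t) : c t₀ ≤ c t := by
  have hcont : Continuous c := continuous_iff_continuousAt.2 fun s => (hc s).continuousAt
  exact image_le_of_deriv_right_lt_deriv_boundary' continuousOn_const
    (fun _ _ => hasDerivWithinAt_const _ _ _) le_rfl hcont.continuousOn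
    (fun s _ => (hc s).hasDerivWithinAt) (fun s _ hs => hs ▸ hF) ⟨ht, le_rfl⟩

theorem exists_nonpos_of_mul_sq_le_deriv {f f' : ℝ → ℝ} {δ t₀ : ℝ} (hδ : 0 < δ)
    (hf : ∀ t ≥ t₀, HasDerivAt f (f' t) t) (hf' : ∀ t ≥ t₀, δ * f t ^ 2 ≤ f' t) :
    ∃ t ≥ t₀, f t ≤ 0 := by
  by_contra! hpos
  -- the time at which the linear upper bound `(f t₀)⁻¹ - δ (t - t₀)` for `(f t)⁻¹` vanishes
  set T := t₀ + (f t₀)⁻¹ / δ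
  have hT : t₀ ≤ T := le_add_of_nonneg_right (by have := hpos t₀ le_rfl; positivity)
  have hinv_le : (f T)⁻¹ ≤ (f t₀)⁻¹ - δ * (T - t₀) := by
    refine image_le_of_deriv_right_le_deriv_boundary (f' := fun t => -f' t / f t ^ 2)
      (B := fun t => (f t₀)⁻¹ - δ * (t - t₀)) (B' := fun _ => -δ) ?_
      (fun t ht => ((hf t ht.1).inv (hpos t ht.1).ne').hasDerivWithinAt) (by simp)
      (by fun_prop) (fun t _ => ?_) (fun t ht => ?_) ⟨hT, le_rfl⟩
    · exact fun t ht => ((hf t ht.1).inv (hpos t ht.1).ne').continuousAt.continuousWithinAt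
    · simpa using ((hasDerivAt_id t).sub_const t₀).const_mul δ |>.const_sub _ |>.hasDerivWithinAt
    · have hft := pow_pos (hpos t ht.1) 2
      rw [neg_div, neg_le_neg_iff, le_div_iff₀ hft]
      exact hf' t ht.1
  have hT_zero : (f t₀)⁻¹ - δ * (T - t₀) = 0 := by
    simp only [T]
    field_simp
    ring
  linarith [inv_pos.2 (hpos T hT)]

section Riccati

variable {c : ℝ → ℝ}

theorem riccati_le_one (hc : ∀ t, HasDerivAt c (c t ^ 2 - 1) t) (t : ℝ) : c t ≤ 1 := by
  by_contra! h
  have hct : 0 < c t ^ 2 - 1 := by nlinarith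
  have hmono : ∀ s ≥ t, c t ≤ c s := fun s hs =>
    le_of_hasDerivAt_autonomous (F := fun x => x ^ 2 - 1) hc hct hs
  have hδ : 0 < 1 - (c t ^ 2)⁻¹ := by
    rw [sub_pos]
    exact inv_lt_one_of_one_lt₀ (by linarith)
  have hgrowth : ∀ s ≥ t, (1 - (c t ^ 2)⁻¹) * c s ^ 2 ≤ c s ^ 2 - 1 := by
    intro s hs
    have hsq : c t ^ 2 ≤ c s ^ 2 := pow_le_pow_left₀ (by linarith) (hmono s hs) 2
    have : 1 ≤ c s ^ 2 / c t ^ 2 := (one_le_div (by positivity)).2 hsq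
    rw [div_eq_mul_inv] at this
    nlinarith
  obtain ⟨s, hs, hcs⟩ := exists_nonpos_of_mul_sq_le_deriv hδ (fun s _ => hc s) hgrowth
  linarith [hmono s hs]

theorem riccati_neg_comp_neg (hc : ∀ t, HasDerivAt c (c t ^ 2 - 1) t) (t : ℝ) :
    HasDerivAt (fun s => -c (-s)) ((-c (-t)) ^ 2 - 1) t := by
  have h := ((hc (-t)).comp t (hasDerivAt_neg t)).neg
  rw [show -((c (-t) ^ 2 - 1) * -1) = (-c (-t)) ^ 2 - 1 by ring] at h
  exact h

end Riccati

/-- Scalar Riccati lemma: a solution of `c′ = c² − 1` defined on all of `ℝ`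
satisfies `|c(t)| ≤ 1` for all `t`. -/
theorem stmt_5 (c : ℝ → ℝ) (hdiff : Differentiable ℝ c)
    (hderiv : ∀ t : ℝ, deriv c t = (c t) ^ 2 - 1) :
    ∀ t : ℝ, |c t| ≤ 1 := by
  have hc : ∀ t, HasDerivAt c (c t ^ 2 - 1) t := fun t => hderiv t ▸ (hdiff t).hasDerivAt
  intro t
  have hneg := riccati_le_one (riccati_neg_comp_neg hc) (-t)
  rw [neg_neg] at hneg
  exact abs_le.2 ⟨by linarith, riccati_le_one hc t⟩
end
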